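/- arXiv:1111.4629 — 2 statements merged into one kernel-verified Lean document; each statement's English description precedes it below -/
import Mathlib

section
/- Let X be a bounded subset of ℂ and let C be a connected component of realm(X). Then C = realm(closure(X) ∩ C). -/
/-- The *filling* of a set `X ⊆ ℂ`: the union of `X` with all bounded connected
components of `ℂ \ X`. -/
def fill (X : Set ℂ) : Set ℂ :=
  {z : ℂ | Bornology.IsBounded (connectedComponentIn Xᶜ z)}

/-- `realm X` is the filling of the closure of `X`. -/
def realm (X : Set ℂ) : Set ℂ := fill (closure X)

open Set Bornology

lemma fill_mono {X Y : Set ℂ} (h : X ⊆ Y) : fill X ⊆ fill Y := by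
  intro z hz
  have hb : IsBounded (connectedComponentIn Xᶜ z) := hz
  exact hb.subset (connectedComponentIn_mono z (compl_subset_compl.2 h))

lemma subset_fill (X : Set ℂ) : X ⊆ fill X := fun z hz => by
  have : z ∉ Xᶜ := not_not.2 hz
  simp only [fill, mem_setOf_eq, connectedComponentIn_eq_empty this]
  exact isBounded_empty

/-- Points of the closure of a connected component of an open set `U` that lie in `U`
are in the component. -/
lemma closure_component_inter {U : Set ℂ} (hU : IsOpen U) (z : ℂ) :
    closure (connectedComponentIn U z) ∩ U ⊆ connectedComponentIn U z := by
  rintro w ⟨hw1, hw2⟩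
  have hW' : IsOpen (connectedComponentIn U w) := hU.connectedComponentIn
  have hwW' : w ∈ connectedComponentIn U w := mem_connectedComponentIn hw2
  obtain ⟨y, hy1, hy2⟩ := mem_closure_iff.1 hw1 _ hW' hwW'
  rw [connectedComponentIn_eq hy2, ← connectedComponentIn_eq hy1]
  exact hwW'

lemma isClosed_fill {K : Set ℂ} (hK : IsClosed K) : IsClosed (fill K) := by
  rw [← isOpen_compl_iff, isOpen_iff_forall_mem_open]
  intro z hz
  have hzK : z ∈ Kᶜ := fun h => hz (subset_fill K h)
  refine ⟨connectedComponentIn Kᶜ z, ?_, hK.isOpen_compl.connectedComponentIn,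
    mem_connectedComponentIn hzK⟩
  intro w hw hwF
  have hEq : connectedComponentIn Kᶜ z = connectedComponentIn Kᶜ w := connectedComponentIn_eq hw
  have hb : IsBounded (connectedComponentIn Kᶜ w) := hwF
  rw [← hEq] at hb
  exact hz hb

lemma isClosed_connectedComponentIn' {F : Set ℂ} (hF : IsClosed F) (z : ℂ) :
    IsClosed (connectedComponentIn F z) := by
  by_cases hz : z ∈ F
  · apply isClosed_of_closure_subset
    exact (isPreconnected_connectedComponentIn.closure).subset_connectedComponentIn
      (subset_closure (mem_connectedComponentIn hz))
      (closure_minimal (connectedComponentIn_subset F z) hF)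
  · rw [connectedComponentIn_eq_empty hz]; exact isClosed_empty

lemma not_isBounded_univ_complex : ¬ IsBounded (univ : Set ℂ) := by
  rw [isBounded_iff_forall_norm_le]
  rintro ⟨r, hr⟩
  have := hr ((|r| + 1 : ℝ) : ℂ) (mem_univ _)
  rw [Complex.norm_real, Real.norm_eq_abs] at this
  have h1 : (0:ℝ) ≤ |r| + 1 := by positivity
  rw [abs_of_nonneg h1] at this
  have := le_abs_self r
  linarith

/-- If `X` is a bounded subset of `ℂ` and `C` is a connected component of `realm X`,
then `C = realm (closure X ∩ C)`. -/
theorem component_of_realm_eq_realm_inter (X : Set ℂ) (hX : Bornology.IsBounded X)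
    (C : Set ℂ) (hC : ∃ z ∈ realm X, C = connectedComponentIn (realm X) z) :
    C = realm (closure X ∩ C) := by
  obtain ⟨z₀, hz₀, rfl⟩ := hC
  set K := closure X with hKdef
  set F := realm X with hFdef
  set C := connectedComponentIn F z₀ with hCdef
  have hKc : IsClosed K := isClosed_closure
  have hFfill : F = fill K := rfl
  have hFclosed : IsClosed F := isClosed_fill hKc
  have hCclosed : IsClosed C := isClosed_connectedComponentIn' hFclosed z₀
  have hKCc : IsClosed (K ∩ C) := hKc.inter hCclosed
  have hrealm : realm (K ∩ C) = fill (K ∩ C) := by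
    unfold realm
    rw [hKCc.closure_eq]
  have hCF : C ⊆ F := connectedComponentIn_subset _ _
  have hKF : K ⊆ F := subset_fill K
  have hfillF : fill (K ∩ C) ⊆ F := fill_mono inter_subset_left
  rw [hrealm]
  ext z
  constructor
  · -- C ⊆ fill (K ∩ C)
    intro hz
    by_cases hzKC : z ∈ K ∩ C
    · exact subset_fill _ hzKC
    · have hzK : z ∈ Kᶜ := fun h => hzKC ⟨h, hz⟩
      set W := connectedComponentIn Kᶜ z with hWdef
      have hzF : z ∈ F := hCF hz
      have hWb : IsBounded W := hzF
      have hWopen : IsOpen W := hKc.isOpen_compl.connectedComponentIn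
      have hzW : z ∈ W := mem_connectedComponentIn hzK
      have hWF : W ⊆ F := by
        intro w hw
        show IsBounded (connectedComponentIn Kᶜ w)
        rw [← connectedComponentIn_eq hw]; exact hWb
      have hbdK : closure W \ W ⊆ K := by
        rintro w ⟨hw1, hw2⟩
        by_contra hwK
        exact hw2 (closure_component_inter hKc.isOpen_compl z ⟨hw1, hwK⟩)
      have hclWF : closure W ⊆ F := by
        intro w hw
        by_cases hwW : w ∈ W
        · exact hWF hwW
        · exact hKF (hbdK ⟨hw, hwW⟩)
      have hclWC : closure W ⊆ C := by
        have h1 : closure W ⊆ connectedComponentIn F z :=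
          (isPreconnected_connectedComponentIn.closure).subset_connectedComponentIn
            (subset_closure hzW) hclWF
        rw [← connectedComponentIn_eq hz] at h1
        exact h1
      have hbdKC : closure W \ W ⊆ K ∩ C := fun w hw => ⟨hbdK hw, hclWC hw.1⟩
      -- show the component of z in (K ∩ C)ᶜ is contained in closure W
      set V := connectedComponentIn (K ∩ C)ᶜ z with hVdef
      have hVsub : V ⊆ (K ∩ C)ᶜ := connectedComponentIn_subset _ _
      have hVclW : V ⊆ closure W := by
        by_contra hcon
        obtain ⟨v, hvV, hvW⟩ := not_subset.1 hcon
        have hzV : z ∈ V := mem_connectedComponentIn (fun h => hzKC h)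
        have := isPreconnected_connectedComponentIn (x := z) (F := (K ∩ C)ᶜ)
        have hsplit := this W (closure W)ᶜ hWopen isClosed_closure.isOpen_compl
          (by
            intro u hu
            by_cases huW : u ∈ closure W
            · left
              by_contra huW2
              exact hVsub hu (hbdKC ⟨huW, huW2⟩)
            · right; exact huW)
          ⟨z, hzV, hzW⟩ ⟨v, hvV, hvW⟩
        obtain ⟨u, _, huW, huWc⟩ := hsplit
        exact huWc (subset_closure huW)
      show IsBounded V
      exact hWb.closure.subset hVclW
  · -- fill (K ∩ C) ⊆ C
    intro hz
    by_cases hzKC : z ∈ K ∩ C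
    · exact hzKC.2
    · set V := connectedComponentIn (K ∩ C)ᶜ z with hVdef
      have hVb : IsBounded V := hz
      have hVopen : IsOpen V := hKCc.isOpen_compl.connectedComponentIn
      have hzV : z ∈ V := mem_connectedComponentIn (fun h => hzKC h)
      have hbdKC : closure V \ V ⊆ K ∩ C := by
        rintro w ⟨hw1, hw2⟩
        by_contra hwKC
        exact hw2 (closure_component_inter hKCc.isOpen_compl z ⟨hw1, hwKC⟩)
      have hbd_ne : (closure V \ V).Nonempty := by
        by_contra hcon
        have hclsub : closure V ⊆ V := by
          intro w hw
          by_contra hwV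
          exact hcon ⟨w, hw, hwV⟩
        have hVclopen : IsClopen V := ⟨isClosed_of_closure_subset hclsub, hVopen⟩
        rcases isClopen_iff.1 hVclopen with h | h
        · rw [h] at hzV; exact hzV
        · rw [h] at hVb; exact not_isBounded_univ_complex hVb
      obtain ⟨w, hwV⟩ := hbd_ne
      have hwKC : w ∈ K ∩ C := hbdKC hwV
      have hclV_fill : closure V ⊆ fill (K ∩ C) := by
        intro u hu
        by_cases huV : u ∈ V
        · show IsBounded (connectedComponentIn (K ∩ C)ᶜ u)
          rw [← connectedComponentIn_eq huV]; exact hVb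
        · exact subset_fill _ (hbdKC ⟨hu, huV⟩)
      have hclVF : closure V ⊆ F := fun u hu => hfillF (hclV_fill hu)
      have hclVC : closure V ⊆ C := by
        have h1 : closure V ⊆ connectedComponentIn F w :=
          (isPreconnected_connectedComponentIn.closure).subset_connectedComponentIn
            hwV.1 hclVF
        rw [← connectedComponentIn_eq hwKC.2] at h1
        exact h1
      exact hclVC (subset_closure hzV)
end

section
/- Let P be a nonconstant polynomial with complex coefficients, viewed as the map z ↦ P(z) on ℂ, and let X be a bounded subset of ℂ. Then P⁻¹(realm(X)) = realm(P⁻¹(X)). -/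
open Polynomial

open Bornology Set Filter

/-!
A nonconstant polynomial `P` is continuous, open, and proper (`‖P z‖ → ∞` as `z → ∞`). For an
open `U`, properness and openness make `P` map each bounded component `C` of `P⁻¹ U` onto a
component of `U`: `P '' C` is open, and it is closed in `U` because `P` maps the compact closure
of `C` to a closed set while `closure C \ C` lies outside `P⁻¹ U`. Hence a component of `P⁻¹ U`
is bounded exactly when the component of `U` containing its image is. Apply this to
`U = ℂ \ closure X`, using `P⁻¹ (closure X) = closure (P⁻¹ X)` for open maps.
-/

section Components

variable {X Y : Type*} [TopologicalSpace X] [LocallyConnectedSpace X] [TopologicalSpace Y]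

theorem IsOpen.closure_connectedComponentIn_inter_subset {F : Set X} (hF : IsOpen F) (x : X) :
    closure (connectedComponentIn F x) ∩ F ⊆ connectedComponentIn F x := by
  rintro y ⟨hy, hyF⟩
  obtain ⟨w, hwy, hwx⟩ :=
    mem_closure_iff.mp hy _ hF.connectedComponentIn (mem_connectedComponentIn hyF)
  rw [connectedComponentIn_eq hwx, ← connectedComponentIn_eq hwy]
  exact mem_connectedComponentIn hyF

theorem IsOpenMap.image_connectedComponentIn_preimage [T2Space Y] {f : X → Y}
    (hf : Continuous f) (hfo : IsOpenMap f) {U : Set Y} (hU : IsOpen U) {x : X} (hx : f x ∈ U)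
    (hC : IsCompact (closure (connectedComponentIn (f ⁻¹' U) x))) :
    f '' connectedComponentIn (f ⁻¹' U) x = connectedComponentIn U (f x) := by
  set C := connectedComponentIn (f ⁻¹' U) x
  have hxC : x ∈ C := mem_connectedComponentIn hx
  have hfC : IsOpen (f '' C) := hfo _ (hU.preimage hf).connectedComponentIn
  refine (hf.continuousOn.image_connectedComponentIn_subset (s := f ⁻¹' U) hx).trans
    (connectedComponentIn_mono _ (image_preimage_subset f U)) |>.antisymm ?_
  refine isPreconnected_connectedComponentIn.subset_of_closure_inter_subset hfC
    ⟨f x, mem_connectedComponentIn hx, mem_image_of_mem f hxC⟩ ?_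
  rintro w ⟨hw, hwU⟩
  have hclosure : closure (f '' C) ⊆ f '' closure C :=
    closure_minimal (image_mono subset_closure) (hC.image hf).isClosed
  obtain ⟨y, hy, rfl⟩ := hclosure hw
  exact mem_image_of_mem f <| (hU.preimage hf).closure_connectedComponentIn_inter_subset x
    ⟨hy, show y ∈ f ⁻¹' U from connectedComponentIn_subset U (f x) hwU⟩

end Components

theorem Filter.Tendsto.isBounded_preimage {α β : Type*} [Bornology α] [Bornology β] {f : α → β}
    (hf : Tendsto f (cobounded α) (cobounded β)) {s : Set β} (hs : Bornology.IsBounded s) :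
    Bornology.IsBounded (f ⁻¹' s) :=
  isBounded_def.2 (hf (isBounded_def.1 hs))

theorem preimage_fill {f : ℂ → ℂ} (hf : Continuous f) (hfo : IsOpenMap f)
    (hfb : Tendsto f (cobounded ℂ) (cobounded ℂ)) {Y : Set ℂ} (hY : IsClosed Y) :
    f ⁻¹' fill Y = fill (f ⁻¹' Y) := by
  ext z
  simp only [fill, mem_preimage, mem_ofPred_eq, ← preimage_compl]
  by_cases hz : f z ∈ Yᶜ
  · constructor
    · intro hD
      exact (hfb.isBounded_preimage hD).subset
        (hf.continuousOn.mapsTo_connectedComponentIn (s := f ⁻¹' Yᶜ) hz |>.mono_right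
          (connectedComponentIn_mono _ (image_preimage_subset f _)))
    · intro hC
      rw [← hfo.image_connectedComponentIn_preimage hf hY.isOpen_compl hz hC.isCompact_closure]
      exact (hC.isCompact_closure.image hf).isBounded.subset (image_mono subset_closure)
  · rw [connectedComponentIn_eq_empty hz,
      connectedComponentIn_eq_empty (show z ∉ f ⁻¹' Yᶜ from hz)]

theorem Polynomial.tendsto_eval_cobounded {R : Type*} [NormedRing R]
    [IsAbsoluteValue (norm : R → ℝ)] (P : R[X]) (hP : 0 < P.degree) :
    Tendsto (fun z : R => P.eval z) (cobounded R) (cobounded R) :=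
  tendsto_norm_atTop_iff_cobounded.mp <| P.tendsto_norm_atTop hP tendsto_norm_cobounded_atTop

theorem preimage_realm_eq_realm_preimage_general (P : Polynomial ℂ) (hP : 0 < P.natDegree)
    (X : Set ℂ) :
    (fun z : ℂ => P.eval z) ⁻¹' (realm X) = realm ((fun z : ℂ => P.eval z) ⁻¹' X) := by
  have hopen : IsOpenMap fun z : ℂ => P.eval z := (P.isOpenQuotientMap_eval hP.ne').isOpenMap
  rw [realm, realm, ← hopen.preimage_closure_eq_closure_preimage P.continuous]
  exact preimage_fill P.continuous hopen
    (P.tendsto_eval_cobounded (natDegree_pos_iff_degree_pos.mp hP)) isClosed_closure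

/-- For a nonconstant polynomial `P` over `ℂ` and a bounded set `X ⊆ ℂ`,
`P⁻¹(realm X) = realm (P⁻¹ X)`. -/
theorem preimage_realm_eq_realm_preimage (P : Polynomial ℂ) (hP : 0 < P.natDegree)
    (X : Set ℂ) (hX : Bornology.IsBounded X) :
    (fun z : ℂ => P.eval z) ⁻¹' (realm X) = realm ((fun z : ℂ => P.eval z) ⁻¹' X) :=
  preimage_realm_eq_realm_preimage_general P hP X
end
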